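/- arXiv:2105.01788 — 2 statements merged into one kernel-verified Lean document; each statement's English description precedes it below -/
import Mathlib

section
/- Let l ≥ 1 and let J : ℝ^{l+1} → ℝ (with coordinates indexed 0, …, l) satisfy the translation invariance J(t + c·𝟙) = J(t) for every t ∈ ℝ^{l+1} and c ∈ ℝ, where 𝟙 is the all-ones vector. Define the linear map R : ℝ^l → ℝ^{l+1} by (Rd)₀ = 0 and (Rd)ᵢ = 2(d₁ + ⋯ + dᵢ) for i = 1, …, l. Let D = {d ∈ ℝ^l : dᵢ > 0 for all i} and T = {t ∈ ℝ^{l+1} : tᵢ₋₁ < tᵢ for i = 1, …, l}. Then a point d* ∈ D is a local minimiser of the restriction of J∘R to D if and only if t* = Rd* is a local minimiser of the restriction of J to T. -/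
/-!
The halved differences `S t = ((tᵢ₊₁ - tᵢ) / 2)ᵢ` give a continuous left inverse of `R` mapping
increasing time vectors to positive vectors, and `R (S t) = t - t₀ 𝟙` is a translate of `t`, so
`J ∘ R ∘ S = J`. Hence `R` and `S` transport neighbourhoods within the two constraint sets into
each other while preserving the cost, and local minimality passes back and forth.
-/

open Set

theorem isLocalMinOn_comp_iff_of_leftInverse {X Y β : Type*} [TopologicalSpace X]
    [TopologicalSpace Y] [Preorder β] {f : Y → β} {g : X → Y} {h : Y → X} {s : Set X}
    {t : Set Y} {x : X} (hg : ContinuousWithinAt g s x) (hh : ContinuousWithinAt h t (g x))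
    (hgs : MapsTo g s t) (hht : MapsTo h t s) (hhg : h (g x) = x) (hf : ∀ y, f (g (h y)) = f y) :
    IsLocalMinOn (f ∘ g) s x ↔ IsLocalMinOn f t (g x) := by
  constructor
  · intro hmin
    rw [← hhg] at hmin
    have := hmin.comp_tendsto (hh.tendsto_nhdsWithin hht)
    simp only [Function.comp_def, hf] at this
    exact this
  · exact fun hmin => hmin.comp_tendsto (hg.tendsto_nhdsWithin hgs)

theorem Fin.eq_of_apply_zero_eq_of_sub_eq {G : Type*} [AddGroup G] {n : ℕ}
    {f g : Fin (n + 1) → G} (h0 : f 0 = g 0)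
    (hsub : ∀ i : Fin n, f i.succ - f i.castSucc = g i.succ - g i.castSucc) :
    f = g := by
  funext i
  induction i using Fin.induction with
  | zero => exact h0
  | succ i ih => simpa [ih] using hsub i

theorem Fin.sum_filter_val_lt_succ {M : Type*} [AddCommMonoid M] {n : ℕ} (f : Fin n → M)
    (i : Fin n) :
    ∑ j ∈ Finset.univ.filter (fun j : Fin n => (j : ℕ) < i + 1), f j
      = ∑ j ∈ Finset.univ.filter (fun j : Fin n => (j : ℕ) < i), f j + f i := by
  have : Finset.univ.filter (fun j : Fin n => (j : ℕ) < i + 1)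
      = insert i (Finset.univ.filter fun j : Fin n => (j : ℕ) < i) := by
    ext j
    simp only [Finset.mem_filter, Finset.mem_univ, true_and, Finset.mem_insert, ← Fin.val_inj]
    omega
  rw [this, Finset.sum_insert (by simp), add_comm]

theorem variable_time_reparametrisation_general
    (l : ℕ)
    (J : (Fin (l + 1) → ℝ) → ℝ)
    (hJ : ∀ (t : Fin (l + 1) → ℝ) (c : ℝ), J (t + fun _ => c) = J t)
    (R : (Fin l → ℝ) → (Fin (l + 1) → ℝ))
    (hR : ∀ (d : Fin l → ℝ) (i : Fin (l + 1)),
      R d i = 2 * ∑ j ∈ Finset.univ.filter (fun j : Fin l => (j : ℕ) < (i : ℕ)), d j)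
    (d : Fin l → ℝ) :
    IsLocalMinOn (J ∘ R) {d' : Fin l → ℝ | ∀ i, 0 < d' i} d ↔
      IsLocalMinOn J
        {t : Fin (l + 1) → ℝ | ∀ i : Fin l, t i.castSucc < t i.succ} (R d) := by
  have hR0 : ∀ d, R d 0 = 0 := by simp [hR]
  have hRsub : ∀ d i, R d i.succ - R d i.castSucc = 2 * d i := by
    intro d i
    rw [hR, hR, Fin.val_succ, Fin.val_castSucc, Fin.sum_filter_val_lt_succ]
    ring
  have hRc : Continuous R := by
    rw [show R = _ from funext fun d => funext (hR d)]
    fun_prop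
  let S : (Fin (l + 1) → ℝ) → Fin l → ℝ := fun t i => (t i.succ - t i.castSucc) / 2
  have hRS : ∀ t, R (S t) = t + fun _ => -t 0 :=
    fun t => Fin.eq_of_apply_zero_eq_of_sub_eq (by simp [hR0]) fun i => by
      simp only [Pi.add_apply, hRsub, S]
      ring
  refine isLocalMinOn_comp_iff_of_leftInverse hRc.continuousWithinAt
    (by fun_prop : Continuous S).continuousWithinAt (fun d' hd' i => ?_) (fun t ht i => ?_)
    (funext fun i => ?_) fun t => by rw [hRS, hJ]
  · linarith [hRsub d' i, hd' i]
  · simp only [S]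
    linarith [ht i]
  · simp [S, hRsub]

/-- Proposition 3: for a translation-invariant cost `J`, `d*` is a local
minimiser of `J ∘ R` on the positive orthant iff `t* = R d*` is a local
minimiser of `J` on the set of strictly increasing time vectors. -/
theorem variable_time_reparametrisation
    (l : ℕ) (hl : 1 ≤ l)
    (J : (Fin (l + 1) → ℝ) → ℝ)
    (hJ : ∀ (t : Fin (l + 1) → ℝ) (c : ℝ), J (t + fun _ => c) = J t)
    (R : (Fin l → ℝ) → (Fin (l + 1) → ℝ))
    (hR : ∀ (d : Fin l → ℝ) (i : Fin (l + 1)),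
      R d i = 2 * ∑ j ∈ Finset.univ.filter (fun j : Fin l => (j : ℕ) < (i : ℕ)), d j)
    (d : Fin l → ℝ) (hd : ∀ i, 0 < d i) :
    IsLocalMinOn (J ∘ R) {d' : Fin l → ℝ | ∀ i, 0 < d' i} d ↔
      IsLocalMinOn J
        {t : Fin (l + 1) → ℝ | ∀ i : Fin l, t i.castSucc < t i.succ} (R d) :=
  variable_time_reparametrisation_general l J hJ R hR d
end

section
/- Let l ≥ 1 and let s₀, s₁, …, s_l be positive natural numbers. For i = 1, …, l let Aᵢ ∈ ℝ^{sᵢ₋₁×sᵢ₋₁}, Bᵢ ∈ ℝ^{sᵢ₋₁×sᵢ}, Cᵢ ∈ ℝ^{sᵢ×sᵢ}, cᵢ⁻ ∈ ℝ^{sᵢ₋₁} and cᵢ⁺ ∈ ℝ^{sᵢ}. Define recursively Ā₁ = A₁, Āᵢ = Aᵢ + Cᵢ₋₁ − Bᵢ₋₁ᵀ Āᵢ₋₁⁻¹ Bᵢ₋₁ for i = 2, …, l, and c̄₁ = c₁⁻, c̄ᵢ = cᵢ⁻ + cᵢ₋₁⁺ − Bᵢ₋₁ᵀ Āᵢ₋₁⁻¹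 c̄ᵢ₋₁ for i = 2, …, l. Assume each Āᵢ is invertible and that C_l − B_lᵀ Ā_l⁻¹ B_l is invertible. Define h_l = (C_l − B_lᵀ Ā_l⁻¹ B_l)⁻¹ (c_l⁺ − B_lᵀ Ā_l⁻¹ c̄_l) and, backwards for i = l, l−1, …, 1, hᵢ₋₁ = Āᵢ⁻¹ (c̄ᵢ − Bᵢ hᵢ). Then the vectors h₀ ∈ ℝ^{s₀}, …, h_l ∈ ℝ^{s_l} satisfy the block-tridiagonal linear system: A₁ h₀ + B₁ h₁ = c₁⁻; Bᵢᵀ hᵢ₋₁ + (Cᵢ + Aᵢ₊₁) hᵢ + Bᵢ₊₁ hᵢ₊₁ = cᵢ⁺ + cᵢ₊₁⁻ for i = 1, …, l−1; and B_lᵀ h_{l−1} + C_l h_l = c_l⁺. -/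
/-!
Each backward step `hᵢ = Āᵢ⁻¹ (c̄ᵢ − Bᵢ hᵢ₊₁)` is equivalent to the local equation
`Āᵢ hᵢ + Bᵢ hᵢ₊₁ = c̄ᵢ`, and it eliminates `hᵢ` from any equation `Bᵢᵀ hᵢ + D hᵢ₊₁ = d`,
turning it into `(D − Bᵢᵀ Āᵢ⁻¹ Bᵢ) hᵢ₊₁ = d − Bᵢᵀ Āᵢ⁻¹ c̄ᵢ`. With `D = Cᵢ + Aᵢ₊₁` the Schur
complement is `Āᵢ₊₁` and the right-hand side involves `c̄ᵢ₊₁`, so row `i + 1` of the system becomes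
the local equation at `i + 1`; the last row becomes the defining equation of `h_l`.
-/

namespace Matrix

variable {R : Type*} [CommRing R] {m n : Type*} [Fintype m] [DecidableEq m] [Fintype n]

theorem mulVec_nonsing_inv_mulVec {M : Matrix m m R} (hM : IsUnit M) (v : m → R) :
    M *ᵥ (M⁻¹ *ᵥ v) = v := by
  rw [mulVec_mulVec, mul_nonsing_inv _ (M.isUnit_iff_isUnit_det.mp hM), one_mulVec]

theorem mulVec_add_mulVec_eq_of_eq_inv_mulVec {Abar : Matrix m m R} (hAbar : IsUnit Abar)
    {B : Matrix m n R} {x c : m → R} {y : n → R} (hx : x = Abar⁻¹ *ᵥ (c - B *ᵥ y)) :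
    Abar *ᵥ x + B *ᵥ y = c := by
  rw [hx, mulVec_nonsing_inv_mulVec hAbar, sub_add_cancel]

theorem transpose_mulVec_add_mulVec_of_eq_inv_mulVec {Abar : Matrix m m R} {B : Matrix m n R}
    (D : Matrix n n R) {x c : m → R} {y : n → R} (hx : x = Abar⁻¹ *ᵥ (c - B *ᵥ y)) :
    Bᵀ *ᵥ x + D *ᵥ y = (D - Bᵀ * Abar⁻¹ * B) *ᵥ y + Bᵀ *ᵥ (Abar⁻¹ *ᵥ c) := by
  rw [hx, sub_mulVec, mulVec_sub, mulVec_sub, ← mulVec_mulVec, ← mulVec_mulVec]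
  abel

end Matrix

open Matrix

theorem block_tridiagonal_recursions_solve_system_general
    (m : ℕ) (s : ℕ → ℕ)
    (A : (i : ℕ) → Matrix (Fin (s i)) (Fin (s i)) ℝ)
    (B : (i : ℕ) → Matrix (Fin (s i)) (Fin (s (i + 1))) ℝ)
    (C : (i : ℕ) → Matrix (Fin (s (i + 1))) (Fin (s (i + 1))) ℝ)
    (cm : (i : ℕ) → Fin (s i) → ℝ)
    (cp : (i : ℕ) → Fin (s (i + 1)) → ℝ)
    (Abar : (i : ℕ) → Matrix (Fin (s i)) (Fin (s i)) ℝ)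
    (cbar : (i : ℕ) → Fin (s i) → ℝ)
    (h : (i : ℕ) → Fin (s i) → ℝ)
    (hAbar0 : Abar 0 = A 0)
    (hAbar : ∀ i < m,
      Abar (i + 1) = A (i + 1) + C i - (B i)ᵀ * (Abar i)⁻¹ * B i)
    (hcbar0 : cbar 0 = cm 0)
    (hcbar : ∀ i < m,
      cbar (i + 1) = cm (i + 1) + cp i - (B i)ᵀ.mulVec ((Abar i)⁻¹.mulVec (cbar i)))
    (hAinv : ∀ i ≤ m, IsUnit (Abar i))
    (hlast_inv : IsUnit (C m - (B m)ᵀ * (Abar m)⁻¹ * B m))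
    (hlast : h (m + 1) =
      (C m - (B m)ᵀ * (Abar m)⁻¹ * B m)⁻¹.mulVec
        (cp m - (B m)ᵀ.mulVec ((Abar m)⁻¹.mulVec (cbar m))))
    (hback : ∀ i ≤ m,
      h i = (Abar i)⁻¹.mulVec (cbar i - (B i).mulVec (h (i + 1)))) :
    (A 0).mulVec (h 0) + (B 0).mulVec (h 1) = cm 0 ∧
    (∀ i < m,
      (B i)ᵀ.mulVec (h i) + (C i + A (i + 1)).mulVec (h (i + 1)) +
          (B (i + 1)).mulVec (h (i + 2)) =
        cp i + cm (i + 1)) ∧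
    (B m)ᵀ.mulVec (h m) + (C m).mulVec (h (m + 1)) = cp m := by
  have local_eq : ∀ i ≤ m, Abar i *ᵥ h i + B i *ᵥ h (i + 1) = cbar i := fun i hi =>
    mulVec_add_mulVec_eq_of_eq_inv_mulVec (hAinv i hi) (hback i hi)
  refine ⟨?first, fun i hi => ?middle, ?last⟩
  case first => simpa only [hAbar0, hcbar0] using local_eq 0 m.zero_le
  case middle =>
    have hnext := local_eq (i + 1) hi
    rw [hAbar i hi, hcbar i hi, add_comm (A (i + 1))] at hnext
    rw [transpose_mulVec_add_mulVec_of_eq_inv_mulVec _ (hback i hi.le), add_right_comm, hnext]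
    abel
  case last =>
    rw [transpose_mulVec_add_mulVec_of_eq_inv_mulVec _ (hback m le_rfl), hlast,
      mulVec_nonsing_inv_mulVec hlast_inv, sub_add_cancel]

/-- Lemma 1 of the paper: the forward recursions over `Āᵢ`, `c̄ᵢ` followed by the
backward recursion for the free derivative values `hᵢ` solve the block-tridiagonal
linear system arising from the KKT conditions of the fixed-time spline QP.
Here the number of blocks is `l = m + 1 ≥ 1`, the paper's `Aᵢ, Bᵢ, Cᵢ, cᵢ⁻, cᵢ⁺`
(for `i = 1, …, l`) are `A (i-1), B (i-1), C (i-1), cm (i-1), cp (i-1)`, and the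
paper's `hᵢ` (for `i = 0, …, l`) is `h i`. -/
theorem block_tridiagonal_recursions_solve_system
    (m : ℕ) (s : ℕ → ℕ) (hs : ∀ i, i ≤ m + 1 → 0 < s i)
    (A : (i : ℕ) → Matrix (Fin (s i)) (Fin (s i)) ℝ)
    (B : (i : ℕ) → Matrix (Fin (s i)) (Fin (s (i + 1))) ℝ)
    (C : (i : ℕ) → Matrix (Fin (s (i + 1))) (Fin (s (i + 1))) ℝ)
    (cm : (i : ℕ) → Fin (s i) → ℝ)
    (cp : (i : ℕ) → Fin (s (i + 1)) → ℝ)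
    (Abar : (i : ℕ) → Matrix (Fin (s i)) (Fin (s i)) ℝ)
    (cbar : (i : ℕ) → Fin (s i) → ℝ)
    (h : (i : ℕ) → Fin (s i) → ℝ)
    (hAbar0 : Abar 0 = A 0)
    (hAbar : ∀ i < m,
      Abar (i + 1) = A (i + 1) + C i - (B i)ᵀ * (Abar i)⁻¹ * B i)
    (hcbar0 : cbar 0 = cm 0)
    (hcbar : ∀ i < m,
      cbar (i + 1) = cm (i + 1) + cp i - (B i)ᵀ.mulVec ((Abar i)⁻¹.mulVec (cbar i)))
    (hAinv : ∀ i ≤ m, IsUnit (Abar i))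
    (hlast_inv : IsUnit (C m - (B m)ᵀ * (Abar m)⁻¹ * B m))
    (hlast : h (m + 1) =
      (C m - (B m)ᵀ * (Abar m)⁻¹ * B m)⁻¹.mulVec
        (cp m - (B m)ᵀ.mulVec ((Abar m)⁻¹.mulVec (cbar m))))
    (hback : ∀ i ≤ m,
      h i = (Abar i)⁻¹.mulVec (cbar i - (B i).mulVec (h (i + 1)))) :
    (A 0).mulVec (h 0) + (B 0).mulVec (h 1) = cm 0 ∧
    (∀ i < m,
      (B i)ᵀ.mulVec (h i) + (C i + A (i + 1)).mulVec (h (i + 1)) +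
          (B (i + 1)).mulVec (h (i + 2)) =
        cp i + cm (i + 1)) ∧
    (B m)ᵀ.mulVec (h m) + (C m).mulVec (h (m + 1)) = cp m :=
  block_tridiagonal_recursions_solve_system_general m s A B C cm cp Abar cbar h hAbar0 hAbar hcbar0
    hcbar hAinv hlast_inv hlast hback
end
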